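/- arXiv:2301.09238 — 6 statements merged into one kernel-verified Lean document; each statement's English description precedes it below -/
import Mathlib

section
/- Let (X,σ) be a Deaconu-Renault system on a metric space (X,d), K ⊆ X compact, n ∈ ℕ, and ε > 0. Then: (1) ssep(n,ε,σ,K) = sep(n,ε,σ,K ∩ Dom(σ^{n−1})); (2) span(n,ε,σ,K ∩ Dom(σ^{n−1})) ≤ sspan(n,ε/2,σ,K). -/
open Set Filter Topology
open scoped ENNReal NNReal

/-- A Deaconu-Renault system: a local homeomorphism `σ` from an open subset `dom` of `X`
onto an open subset of `X`. (The underlying space is assumed locally compact Hausdorff in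
the theorems.) -/
structure DRSystem (X : Type*) [TopologicalSpace X] where
  toFun : X → X
  dom : Set X
  isOpen_dom : IsOpen dom
  isOpen_image : IsOpen (toFun '' dom)
  isLocalHomeomorphOn : IsLocalHomeomorphOn toFun dom

namespace DRSystem

variable {X Y : Type*} [TopologicalSpace X] [TopologicalSpace Y]

/-- `Dom(σⁿ)`, defined inductively by `Dom(σ⁰) = X` and `Dom(σⁿ⁺¹) = σ⁻¹(Dom(σⁿ))`
(preimage of the partial map `σ`). -/
def domN (S : DRSystem X) : ℕ → Set X
  | 0 => Set.univ
  | n + 1 => S.dom ∩ S.toFun ⁻¹' S.domN n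

/-- `I_n(x) = {i ∈ {0,…,n−1} : x ∈ Dom(σ^i)}`. -/
def IN (S : DRSystem X) (n : ℕ) (x : X) : Set ℕ :=
  {i : ℕ | i < n ∧ x ∈ S.domN i}

/-- `d_n(x,y) = max_{i ∈ I_n(x) ∩ I_n(y)} ρ(σ^i x, σ^i y)`, for a metric `ρ`. -/
noncomputable def dN (S : DRSystem X) (ρ : X → X → ℝ) (n : ℕ) (x y : X) : ℝ :=
  sSup ((fun i => ρ (S.toFun^[i] x) (S.toFun^[i] y)) '' (S.IN n x ∩ S.IN n y))

/-- `A` is an `(n,ε,σ,Z)`-separated set. -/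
def IsSep (S : DRSystem X) (ρ : X → X → ℝ) (n : ℕ) (ε : ℝ) (Z A : Set X) : Prop :=
  A ⊆ Z ∧ A.Pairwise fun x y => ε < S.dN ρ n x y

/-- `B` is an `(n,ε,σ,Z)`-spanning set. -/
def IsSpan (S : DRSystem X) (ρ : X → X → ℝ) (n : ℕ) (ε : ℝ) (Z B : Set X) : Prop :=
  B ⊆ Z ∧ ∀ x ∈ Z, ∃ y ∈ B, S.dN ρ n x y ≤ ε

/-- `sep(n,ε,σ,Z)`: the largest cardinality of an `(n,ε,σ,Z)`-separated set. -/
noncomputable def sep (S : DRSystem X) (ρ : X → X → ℝ) (n : ℕ) (ε : ℝ) (Z : Set X) : ℕ∞ :=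
  ⨆ (A : Set X) (_ : S.IsSep ρ n ε Z A), A.encard

/-- `span(n,ε,σ,Z)`: the smallest cardinality of an `(n,ε,σ,Z)`-spanning set. -/
noncomputable def span (S : DRSystem X) (ρ : X → X → ℝ) (n : ℕ) (ε : ℝ) (Z : Set X) : ℕ∞ :=
  ⨅ (B : Set X) (_ : S.IsSpan ρ n ε Z B), B.encard

/-- `ssep(n,ε,σ,K) = sup_F sep(n,ε,σ,K∩F)`, over closed `F ⊆ Dom(σ^{n-1})`. -/
noncomputable def ssep (S : DRSystem X) (ρ : X → X → ℝ) (n : ℕ) (ε : ℝ) (K : Set X) : ℕ∞ :=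
  ⨆ (F : Set X) (_ : IsClosed F ∧ F ⊆ S.domN (n - 1)), S.sep ρ n ε (K ∩ F)

/-- `sspan(n,ε,σ,K) = sup_F span(n,ε,σ,K∩F)`, over closed `F ⊆ Dom(σ^{n-1})`. -/
noncomputable def sspan (S : DRSystem X) (ρ : X → X → ℝ) (n : ℕ) (ε : ℝ) (K : Set X) : ℕ∞ :=
  ⨆ (F : Set X) (_ : IsClosed F ∧ F ⊆ S.domN (n - 1)), S.span ρ n ε (K ∩ F)

/-- The metric entropy `h_ρ(σ) = sup_K lim_{ε→0} limsup_n (1/n) log ssep(n,ε,σ,K)`.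
Since `ssep` (hence the inner quantity) is monotone nonincreasing in `ε`, the limit as
`ε → 0⁺` equals the supremum over `ε > 0`. -/
noncomputable def hMet (S : DRSystem X) (ρ : X → X → ℝ) : EReal :=
  ⨆ (K : Set X) (_ : IsCompact K), ⨆ (ε : ℝ) (_ : (0 : ℝ) < ε),
    Filter.atTop.limsup fun n : ℕ =>
      ((n : ℝ)⁻¹ : EReal) * ENNReal.log ((S.ssep ρ n ε K : ℕ∞) : ℝ≥0∞)

/-- A conjugacy between Deaconu-Renault systems: a homeomorphism intertwining the
partial maps on their domains, in both directions. -/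
def IsConjugacy (S : DRSystem X) (T : DRSystem Y) (φ : X ≃ₜ Y) : Prop :=
  (∀ x ∈ S.dom, T.toFun (φ x) = φ (S.toFun x)) ∧
  (∀ y ∈ T.dom, S.toFun (φ.symm y) = φ.symm (T.toFun y))

/-- A factor map between Deaconu-Renault systems: continuous, compact covering, surjective,
with `φ(Dom σ_X) ⊆ Dom σ_Y`, `σ_Y ∘ φ = φ ∘ σ_X` on `Dom σ_X`, and `φ⁻¹(Dom σ_Y) ⊆ Dom σ_X`. -/
def IsFactorMap (S : DRSystem X) (T : DRSystem Y) (φ : X → Y) : Prop :=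
  Continuous φ ∧
  (∀ K : Set Y, IsCompact K → ∃ C : Set X, IsCompact C ∧ φ '' C = K) ∧
  Function.Surjective φ ∧
  φ '' S.dom ⊆ T.dom ∧
  (∀ x ∈ S.dom, T.toFun (φ x) = φ (S.toFun x)) ∧
  φ ⁻¹' T.dom ⊆ S.dom

/-- `α` is an open cover of `K`. -/
def IsOpenCover (α : Set (Set X)) (K : Set X) : Prop :=
  (∀ A ∈ α, IsOpen A) ∧ K ⊆ ⋃₀ α

/-- `σ^{-i}(A)`: the preimage of `A` under the partial map `σ^i`. -/
def preN (S : DRSystem X) (i : ℕ) (A : Set X) : Set X :=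
  S.domN i ∩ S.toFun^[i] ⁻¹' A

/-- The join `α ∨ β` of two covers. -/
def covJoin (α β : Set (Set X)) : Set (Set X) :=
  Set.image2 (· ∩ ·) α β

/-- `α_n = α ∨ σ^{-1}(α) ∨ … ∨ σ^{-n}(α)`. -/
def covIter (S : DRSystem X) (α : Set (Set X)) (n : ℕ) : Set (Set X) :=
  {B | ∃ f : ℕ → Set X, (∀ i ≤ n, f i ∈ α) ∧ B = ⋂ i ∈ Finset.range (n + 1), S.preN i (f i)}

/-- `Y_n = Y ∩ σ^{-1}(Y) ∩ … ∩ σ^{-n}(Y)`. -/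
def setIter (S : DRSystem X) (Z : Set X) (n : ℕ) : Set X :=
  ⋂ i ∈ Finset.range (n + 1), S.preN i Z

/-- `N(α,Z)`: the smallest cardinality of a subcover of `α` covering `Z`. -/
noncomputable def Ncov (α : Set (Set X)) (Z : Set X) : ℕ∞ :=
  ⨅ (β : Set (Set X)) (_ : β ⊆ α ∧ Z ⊆ ⋃₀ β), β.encard

/-- `H(α,Z) = log N(α,Z)` (with `N = 1` when `Z = ∅`, following the paper's convention). -/
noncomputable def Hcov (α : Set (Set X)) (Z : Set X) : EReal :=
  ENNReal.log ((max 1 (Ncov α Z) : ℕ∞) : ℝ≥0∞)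

/-- `h(α,σ,K) = lim_n (1/n) H(α_n,K_n)` (expressed as a `limsup`; the limit exists). -/
noncomputable def hCov (S : DRSystem X) (α : Set (Set X)) (K : Set X) : EReal :=
  Filter.atTop.limsup fun n : ℕ =>
    ((n : ℝ)⁻¹ : EReal) * Hcov (S.covIter α n) (S.setIter K n)

/-- `h(σ,K) = sup_α h(α,σ,K)` over all open covers `α` of `K`. -/
noncomputable def hTopAt (S : DRSystem X) (K : Set X) : EReal :=
  ⨆ (α : Set (Set X)) (_ : IsOpenCover α K), S.hCov α K

/-- The topological entropy `h(σ) = sup_K h(σ,K)` over all compact `K ⊆ X`. -/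
noncomputable def hTop (S : DRSystem X) : EReal :=
  ⨆ (K : Set X) (_ : IsCompact K), S.hTopAt K

end DRSystem

/-!
A finite subset `A` of `K ∩ Dom(σ^{n-1})` is closed, hence one of the sets `F` in the suprema
defining `ssep` and `sspan`, and if it is `(n,ε)`-separated it is so inside `K ∩ A`. Since a set
is exhausted by its finite subsets, `sep(n,ε,σ,K ∩ Dom(σ^{n-1})) ≤ ssep(n,ε,σ,K)`; the reverse
inequality is monotonicity of `sep`. Since `d_n` satisfies the triangle inequality on
`Dom(σ^{n-1})`, an `(n,ε/2)`-spanning set of `K ∩ A` has at least `|A|` points; applied to the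
finite subsets of a maximal `(n,ε)`-separated set, which is `(n,ε)`-spanning, this bounds
`span(n,ε,σ,K ∩ Dom(σ^{n-1}))` by `sspan(n,ε/2,σ,K)`.
-/

theorem Set.encard_le_of_forall_finite_subset {α : Type*} {s : Set α} {k : ℕ∞}
    (h : ∀ t ⊆ s, t.Finite → t.encard ≤ k) : s.encard ≤ k :=
  ENat.forall_natCast_le_iff_le.mp fun m hm => by
    obtain ⟨t, hts, ht⟩ := Set.exists_subset_encard_eq hm
    exact ht ▸ h t hts (Set.finite_of_encard_eq_coe ht)

namespace DRSystem

variable {X : Type*} [PseudoMetricSpace X] (S : DRSystem X) {n : ℕ} {ε : ℝ}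

theorem domN_antitone : Antitone S.domN :=
  antitone_nat_of_succ_le fun m => by
    induction m with
    | zero => exact subset_univ _
    | succ m ih => exact inter_subset_inter_right _ (preimage_mono ih)

theorem mem_IN_of_mem_domN {i : ℕ} {x : X} (hx : x ∈ S.domN (n - 1)) (hi : i < n) :
    i ∈ S.IN n x :=
  ⟨hi, S.domN_antitone (Nat.le_pred_of_lt hi) hx⟩

theorem dN_bddAbove (x y : X) :
    BddAbove ((fun i => dist (S.toFun^[i] x) (S.toFun^[i] y)) '' (S.IN n x ∩ S.IN n y)) :=
  (((finite_Iio n).subset fun _ hi => hi.1.1).image _).bddAbove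

theorem dist_iterate_le_dN {x y : X} {i : ℕ} (hi : i ∈ S.IN n x ∩ S.IN n y) :
    dist (S.toFun^[i] x) (S.toFun^[i] y) ≤ S.dN dist n x y :=
  le_csSup (S.dN_bddAbove x y) (mem_image_of_mem _ hi)

theorem dist_le_dN (hn : 1 ≤ n) (x y : X) : dist x y ≤ S.dN dist n x y :=
  S.dist_iterate_le_dN (i := 0) ⟨⟨hn, mem_univ x⟩, ⟨hn, mem_univ y⟩⟩

theorem dN_nonneg (hn : 1 ≤ n) (x y : X) : 0 ≤ S.dN dist n x y :=
  dist_nonneg.trans (S.dist_le_dN hn x y)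

theorem dN_self_nonpos (x : X) : S.dN dist n x x ≤ 0 :=
  Real.sSup_nonpos <| by
    rintro r ⟨i, -, rfl⟩
    exact (dist_self _).le

theorem dN_comm (x y : X) : S.dN dist n x y = S.dN dist n y x := by
  unfold dN
  rw [inter_comm]
  exact congrArg sSup (image_congr fun i _ => dist_comm _ _)

theorem dN_triangle (hn : 1 ≤ n) {x y z : X} (hx : x ∈ S.domN (n - 1))
    (hy : y ∈ S.domN (n - 1)) (hz : z ∈ S.domN (n - 1)) :
    S.dN dist n x y ≤ S.dN dist n x z + S.dN dist n z y := by
  refine Real.sSup_le ?_ (add_nonneg (S.dN_nonneg hn x z) (S.dN_nonneg hn z y))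
  rintro r ⟨i, ⟨⟨hin, -⟩, -⟩, rfl⟩
  exact (dist_triangle _ (S.toFun^[i] z) _).trans <| add_le_add
    (S.dist_iterate_le_dN ⟨S.mem_IN_of_mem_domN hx hin, S.mem_IN_of_mem_domN hz hin⟩)
    (S.dist_iterate_le_dN ⟨S.mem_IN_of_mem_domN hz hin, S.mem_IN_of_mem_domN hy hin⟩)

variable {S} {Z Z' A B : Set X}

theorem IsSep.mono (hA : S.IsSep dist n ε Z A) (hZ : Z ⊆ Z') : S.IsSep dist n ε Z' A :=
  ⟨hA.1.trans hZ, hA.2⟩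

theorem IsSep.encard_le_sep (hA : S.IsSep dist n ε Z A) : A.encard ≤ S.sep dist n ε Z :=
  le_iSup₂ (f := fun A (_ : S.IsSep dist n ε Z A) => A.encard) A hA

theorem sep_mono (hZ : Z ⊆ Z') : S.sep dist n ε Z ≤ S.sep dist n ε Z' :=
  iSup₂_le fun _ hA => (hA.mono hZ).encard_le_sep

theorem span_le_encard (hB : S.IsSpan dist n ε Z B) : S.span dist n ε Z ≤ B.encard :=
  iInf₂_le B hB

/-- Sending each point of `A` to an `ε/2`-close point of `B` is injective, by the triangle
inequality for `d_n`. -/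
theorem IsSep.encard_le_encard_of_isSpan (hn : 1 ≤ n) (hZ : Z ⊆ S.domN (n - 1))
    (hA : S.IsSep dist n ε Z A) (hB : S.IsSpan dist n (ε / 2) Z B) : A.encard ≤ B.encard := by
  choose! f hfB hf using fun x (hx : x ∈ Z) => hB.2 x hx
  refine encard_le_encard_of_injOn (fun x hx => hfB x (hA.1 hx)) fun x hx y hy hxy => ?_
  by_contra hne
  have hsep : ε < S.dN dist n x y := hA.2 hx hy hne
  have hxf : S.dN dist n x (f y) ≤ ε / 2 := hxy ▸ hf x (hA.1 hx)
  have hyf : S.dN dist n (f y) y ≤ ε / 2 := S.dN_comm y (f y) ▸ hf y (hA.1 hy)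
  have := S.dN_triangle hn (hZ (hA.1 hx)) (hZ (hA.1 hy)) (hZ (hB.1 (hfB y (hA.1 hy))))
  linarith

theorem IsSep.encard_le_span (hn : 1 ≤ n) (hZ : Z ⊆ S.domN (n - 1))
    (hA : S.IsSep dist n ε Z A) : A.encard ≤ S.span dist n (ε / 2) Z :=
  le_iInf₂ fun _ hB => hA.encard_le_encard_of_isSpan hn hZ hB

theorem sep_le_ssep {K F : Set X} (hF : IsClosed F) (hFdom : F ⊆ S.domN (n - 1)) :
    S.sep dist n ε (K ∩ F) ≤ S.ssep dist n ε K :=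
  le_iSup₂ (f := fun F (_ : IsClosed F ∧ F ⊆ S.domN (n - 1)) => S.sep dist n ε (K ∩ F))
    F ⟨hF, hFdom⟩

theorem span_le_sspan {K F : Set X} (hF : IsClosed F) (hFdom : F ⊆ S.domN (n - 1)) :
    S.span dist n ε (K ∩ F) ≤ S.sspan dist n ε K :=
  le_iSup₂ (f := fun F (_ : IsClosed F ∧ F ⊆ S.domN (n - 1)) => S.span dist n ε (K ∩ F))
    F ⟨hF, hFdom⟩

theorem IsSep.isSep_inter_self {K t : Set X} (ht : S.IsSep dist n ε (K ∩ S.domN (n - 1)) t) :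
    S.IsSep dist n ε (K ∩ t) t :=
  ⟨fun _ hx => ⟨(ht.1 hx).1, hx⟩, ht.2⟩

theorem IsSep.encard_le_ssep [T1Space X] {K : Set X}
    (hA : S.IsSep dist n ε (K ∩ S.domN (n - 1)) A) : A.encard ≤ S.ssep dist n ε K :=
  encard_le_of_forall_finite_subset fun t htA ht =>
    have htsep : S.IsSep dist n ε (K ∩ S.domN (n - 1)) t := ⟨htA.trans hA.1, hA.2.mono htA⟩
    htsep.isSep_inter_self.encard_le_sep.trans <|
      sep_le_ssep ht.isClosed fun _ hx => (htsep.1 hx).2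

theorem IsSep.encard_le_sspan [T1Space X] (hn : 1 ≤ n) {K : Set X}
    (hA : S.IsSep dist n ε (K ∩ S.domN (n - 1)) A) : A.encard ≤ S.sspan dist n (ε / 2) K :=
  encard_le_of_forall_finite_subset fun t htA ht =>
    have htsep : S.IsSep dist n ε (K ∩ S.domN (n - 1)) t := ⟨htA.trans hA.1, hA.2.mono htA⟩
    have htdom : t ⊆ S.domN (n - 1) := fun _ hx => (htsep.1 hx).2
    (htsep.isSep_inter_self.encard_le_span hn fun _ hx => htdom hx.2).trans <|
      span_le_sspan ht.isClosed htdom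

/-- A maximal separated set is spanning. -/
theorem exists_isSep_isSpan (hε : 0 ≤ ε) (Z : Set X) :
    ∃ M, S.IsSep dist n ε Z M ∧ S.IsSpan dist n ε Z M := by
  obtain ⟨M, hM⟩ := zorn_subset {A | S.IsSep dist n ε Z A} fun c hc hchain =>
    ⟨⋃₀ c, ⟨sUnion_subset fun A hA => (hc hA).1,
        (pairwise_sUnion hchain.directedOn).2 fun A hA => (hc hA).2⟩,
      fun _ => subset_sUnion_of_mem⟩
  refine ⟨M, hM.1, hM.1.1, fun x hx => ?_⟩
  by_contra! hfar
  have hxM : x ∉ M := fun hxM => (hfar x hxM).not_ge ((S.dN_self_nonpos x).trans hε)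
  have : Std.Symm fun x y => ε < S.dN dist n x y := ⟨fun a b h => S.dN_comm a b ▸ h⟩
  have hins : S.IsSep dist n ε Z (insert x M) :=
    ⟨insert_subset hx hM.1.1, pairwise_insert_of_symm.2 ⟨hM.1.2, fun y hy _ => hfar y hy⟩⟩
  exact hxM (hM.2 hins (subset_insert x M) (mem_insert x M))

end DRSystem

theorem statement4_general {X : Type*} [MetricSpace X]
    (S : DRSystem X) (K : Set X) (n : ℕ) (hn : 1 ≤ n)
    (ε : ℝ) (hε : 0 < ε) :
    S.ssep dist n ε K = S.sep dist n ε (K ∩ S.domN (n - 1)) ∧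
      S.span dist n ε (K ∩ S.domN (n - 1)) ≤ S.sspan dist n (ε / 2) K := by
  refine ⟨le_antisymm ?_ ?_, ?_⟩
  · exact iSup₂_le fun F hF => DRSystem.sep_mono (inter_subset_inter_right K hF.2)
  · exact iSup₂_le fun A hA => hA.encard_le_ssep
  · obtain ⟨M, hMsep, hMspan⟩ := S.exists_isSep_isSpan hε.le (K ∩ S.domN (n - 1))
    exact (DRSystem.span_le_encard hMspan).trans (hMsep.encard_le_sspan hn)

/-- (1) `ssep(n,ε,σ,K) = sep(n,ε,σ,K ∩ Dom(σ^{n-1}))`;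
(2) `span(n,ε,σ,K ∩ Dom(σ^{n-1})) ≤ sspan(n,ε/2,σ,K)`. -/
theorem statement4 {X : Type*} [MetricSpace X] [LocallyCompactSpace X]
    (S : DRSystem X) (K : Set X) (hK : IsCompact K) (n : ℕ) (hn : 1 ≤ n)
    (ε : ℝ) (hε : 0 < ε) :
    S.ssep dist n ε K = S.sep dist n ε (K ∩ S.domN (n - 1)) ∧
      S.span dist n ε (K ∩ S.domN (n - 1)) ≤ S.sspan dist n (ε / 2) K :=
  statement4_general S K n hn ε hε
end

section
/- Let (X,σ) be a Deaconu-Renault system on a metric space (X,d) satisfying the density hypothesis: for every n ∈ ℕ, every x ∈ Dom(σ^{n−1}) and every open neighborhood U of x, there exists y ∈ U with y ∈ Dom(σⁿ). Then for every compact open subset K of X, every ε > 0 and every n ∈ ℕ, ssep(n,ε,σ,K) ≤ ssep(n+1,ε,σ,K). -/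
open Set Filter Topology
open scoped ENNReal NNReal

section Aux

namespace DRSystem

variable {X : Type*} [MetricSpace X]

lemma aux_isOpen_domN (S : DRSystem X) (i : ℕ) : IsOpen (S.domN i) := by
  induction i with
  | zero => exact isOpen_univ
  | succ i ih =>
    exact S.isLocalHomeomorphOn.continuousOn.isOpen_inter_preimage S.isOpen_dom ih

lemma aux_domN_antitone (S : DRSystem X) : Antitone S.domN := by
  refine antitone_nat_of_succ_le fun i => ?_
  induction i with
  | zero => exact Set.subset_univ _
  | succ i ih => exact Set.inter_subset_inter_right _ (Set.preimage_mono ih)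

lemma aux_cont_iter (S : DRSystem X) (i : ℕ) :
    ContinuousOn (S.toFun^[i]) (S.domN i) := by
  induction i with
  | zero => simpa using continuousOn_id
  | succ i ih =>
    rw [Function.iterate_succ]
    exact ih.comp (S.isLocalHomeomorphOn.continuousOn.mono Set.inter_subset_left)
      (fun x hx => hx.2)

lemma aux_finite_dNset (S : DRSystem X) (n : ℕ) (x y : X) :
    ((fun i => dist (S.toFun^[i] x) (S.toFun^[i] y)) '' (S.IN n x ∩ S.IN n y)).Finite :=
  (((Set.finite_Iio n).subset (fun j hj => hj.1.1)).image _)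

lemma aux_le_dN (S : DRSystem X) {n i : ℕ} {x y : X} (hi : i < n)
    (hx : x ∈ S.domN i) (hy : y ∈ S.domN i) :
    dist (S.toFun^[i] x) (S.toFun^[i] y) ≤ S.dN dist n x y :=
  le_csSup (S.aux_finite_dNset n x y).bddAbove ⟨i, ⟨⟨hi, hx⟩, ⟨hi, hy⟩⟩, rfl⟩

lemma aux_dN_attained (S : DRSystem X) {n : ℕ} (hn : 1 ≤ n) (x y : X) :
    ∃ i, i < n ∧ x ∈ S.domN i ∧ y ∈ S.domN i ∧
      dist (S.toFun^[i] x) (S.toFun^[i] y) = S.dN dist n x y := by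
  have h0x : (0 : ℕ) ∈ S.IN n x := ⟨hn, Set.mem_univ x⟩
  have h0y : (0 : ℕ) ∈ S.IN n y := ⟨hn, Set.mem_univ y⟩
  have hne : ((fun i => dist (S.toFun^[i] x) (S.toFun^[i] y)) ''
      (S.IN n x ∩ S.IN n y)).Nonempty := ⟨_, ⟨0, ⟨h0x, h0y⟩, rfl⟩⟩
  obtain ⟨i, ⟨⟨hi, hx⟩, ⟨-, hy⟩⟩, heq⟩ := hne.csSup_mem (S.aux_finite_dNset n x y)
  exact ⟨i, hi, hx, hy, heq⟩

lemma aux_dN_self (S : DRSystem X) (n : ℕ) (z : X) : S.dN dist n z z ≤ 0 :=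
  Real.sSup_le (by rintro a ⟨i, -, rfl⟩; simp) le_rfl

lemma aux_main (S : DRSystem X)
    (hdense : ∀ n : ℕ, 1 ≤ n → ∀ x ∈ S.domN (n - 1), ∀ U : Set X, IsOpen U → x ∈ U →
      ∃ y ∈ U, y ∈ S.domN n)
    (K : Set X) (hKopen : IsOpen K)
    (ε : ℝ) (hε : 0 < ε) (n : ℕ) (hn : 1 ≤ n)
    (F : Set X) (hFsub : F ⊆ S.domN (n - 1))
    (A : Set X) (hA : S.IsSep dist n ε (K ∩ F) A) (hAfin : A.Finite) :
    A.encard ≤ S.ssep dist (n + 1) ε K := by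
  classical
  set s : Finset X := hAfin.toFinset with hs
  set t : Finset (X × X) := (s ×ˢ s).filter (fun p => p.1 ≠ p.2) with ht
  have hAK : ∀ x ∈ A, x ∈ K := fun x hx => (hA.1 hx).1
  have hAF : ∀ x ∈ A, x ∈ F := fun x hx => (hA.1 hx).2
  have hpair : ∀ p ∈ t, ε < S.dN dist n p.1 p.2 := by
    intro p hp
    simp only [ht, Finset.mem_filter, Finset.mem_product, hs,
      Set.Finite.mem_toFinset] at hp
    exact hA.2 hp.1.1 hp.1.2 hp.2
  set δ : ℝ := if h : t.Nonempty then
      (t.inf' h (fun p => S.dN dist n p.1 p.2) - ε) / 2 else 1 with hδ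
  have hδpos : 0 < δ := by
    rw [hδ]; split_ifs with h
    · have h2 : ε < t.inf' h (fun p => S.dN dist n p.1 p.2) :=
        (Finset.lt_inf'_iff h).mpr hpair
      linarith
    · norm_num
  have hgap : ∀ x ∈ A, ∀ y ∈ A, x ≠ y → ε + 2 * δ ≤ S.dN dist n x y := by
    intro x hx y hy hxy
    have hmem : (x, y) ∈ t := by
      simp only [ht, Finset.mem_filter, Finset.mem_product, hs,
        Set.Finite.mem_toFinset]
      exact ⟨⟨hx, hy⟩, hxy⟩
    have hne : t.Nonempty := ⟨_, hmem⟩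
    have h1 := Finset.inf'_le (fun p => S.dN dist n p.1 p.2) hmem
    rw [hδ, dif_pos hne]
    have h2 : t.inf' hne (fun p => S.dN dist n p.1 p.2) ≤ S.dN dist n x y := h1
    linarith
  have hAdom : ∀ x ∈ A, ∀ i, i < n → x ∈ S.domN i := fun x hx i hi =>
    S.aux_domN_antitone (Nat.le_pred_of_lt hi) (hFsub (hAF x hx))
  have hex : ∀ x : X, ∃ y : X, x ∈ A →
      (y ∈ K ∧ y ∈ S.domN n ∧ ∀ i < n, dist (S.toFun^[i] y) (S.toFun^[i] x) < δ) := by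
    intro x
    by_cases hx : x ∈ A
    · set U : Set X := K ∩ ⋂ i ∈ Finset.range n,
        (S.domN i ∩ S.toFun^[i] ⁻¹' Metric.ball (S.toFun^[i] x) δ) with hU
      have hUopen : IsOpen U := by
        refine hKopen.inter (isOpen_biInter_finset fun i _ => ?_)
        exact (S.aux_cont_iter i).isOpen_inter_preimage (S.aux_isOpen_domN i)
          Metric.isOpen_ball
      have hxU : x ∈ U := by
        refine ⟨hAK x hx, ?_⟩
        simp only [Set.mem_iInter]
        intro i hi
        exact ⟨hAdom x hx i (Finset.mem_range.mp hi),
          Metric.mem_ball_self hδpos⟩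
      obtain ⟨y, hyU, hyD⟩ := hdense n hn x (hFsub (hAF x hx)) U hUopen hxU
      refine ⟨y, fun _ => ⟨hyU.1, hyD, fun i hi => ?_⟩⟩
      have h3 := hyU.2
      simp only [Set.mem_iInter] at h3
      exact (h3 i (Finset.mem_range.mpr hi)).2
    · exact ⟨x, fun h => absurd h hx⟩
  choose g hg using hex
  have hgK : ∀ x ∈ A, g x ∈ K := fun x hx => (hg x hx).1
  have hgD : ∀ x ∈ A, g x ∈ S.domN n := fun x hx => (hg x hx).2.1
  have hgδ : ∀ x ∈ A, ∀ i < n, dist (S.toFun^[i] (g x)) (S.toFun^[i] x) < δ :=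
    fun x hx => (hg x hx).2.2
  have hgdom : ∀ x ∈ A, ∀ i ≤ n, g x ∈ S.domN i := fun x hx i hi =>
    S.aux_domN_antitone hi (hgD x hx)
  have pc : ∀ x ∈ A, ∀ y ∈ A, x ≠ y → ε < S.dN dist (n + 1) (g x) (g y) := by
    intro x hx y hy hxy
    obtain ⟨i, hi, hxd, hyd, heq⟩ := S.aux_dN_attained hn x y
    have h1 : ε + 2 * δ ≤ dist (S.toFun^[i] x) (S.toFun^[i] y) :=
      heq ▸ hgap x hx y hy hxy
    have h2 := hgδ x hx i hi
    have h3 := hgδ y hy i hi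
    have h4 : ε < dist (S.toFun^[i] (g x)) (S.toFun^[i] (g y)) := by
      have ht4 := dist_triangle4 (S.toFun^[i] x) (S.toFun^[i] (g x))
        (S.toFun^[i] (g y)) (S.toFun^[i] y)
      have hc2 : dist (S.toFun^[i] x) (S.toFun^[i] (g x))
          = dist (S.toFun^[i] (g x)) (S.toFun^[i] x) := dist_comm _ _
      have hc3 : dist (S.toFun^[i] (g y)) (S.toFun^[i] y)
          = dist (S.toFun^[i] (g y)) (S.toFun^[i] y) := rfl
      linarith
    exact h4.trans_le (S.aux_le_dN (hi.trans (Nat.lt_succ_self n))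
      (hgdom x hx i hi.le) (hgdom y hy i hi.le))
  have hinj : Set.InjOn g A := by
    intro x hx y hy hxy
    by_contra hne
    have h5 := pc x hx y hy hne
    rw [hxy] at h5
    exact absurd h5 (not_lt.mpr ((S.aux_dN_self (n + 1) (g y)).trans hε.le))
  set A' : Set X := g '' A with hA'
  have hA'fin : A'.Finite := hAfin.image g
  have hsep : S.IsSep dist (n + 1) ε (K ∩ A') A' := by
    constructor
    · rintro a ⟨x, hx, rfl⟩
      exact ⟨hgK x hx, ⟨x, hx, rfl⟩⟩
    · rintro a ⟨x, hx, rfl⟩ b ⟨y, hy, rfl⟩ hab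
      exact pc x hx y hy (fun h => hab (by rw [h]))
  have hcard : A'.encard = A.encard := hinj.encard_image
  rw [← hcard]
  have step1 : A'.encard ≤ S.sep dist (n + 1) ε (K ∩ A') := by
    simp only [DRSystem.sep]
    exact le_iSup₂ (f := fun (B : Set X) (_ : S.IsSep dist (n + 1) ε (K ∩ A') B) =>
      B.encard) A' hsep
  have hcl : IsClosed A' ∧ A' ⊆ S.domN ((n + 1) - 1) := by
    refine ⟨hA'fin.isClosed, ?_⟩
    rintro a ⟨x, hx, rfl⟩
    simpa using hgD x hx
  have step2 : S.sep dist (n + 1) ε (K ∩ A') ≤ S.ssep dist (n + 1) ε K := by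
    simp only [DRSystem.ssep]
    exact le_iSup₂ (f := fun (G : Set X) (_ : IsClosed G ∧ G ⊆ S.domN ((n + 1) - 1)) =>
      S.sep dist (n + 1) ε (K ∩ G)) A' hcl
  exact step1.trans step2

end DRSystem

end Aux

/-- under the density hypothesis (every point of `Dom(σ^{n-1})` can be
approximated by points of `Dom(σⁿ)`), `ssep(n,ε,σ,K)` is monotone in `n` for compact open `K`. -/
theorem statement6 {X : Type*} [MetricSpace X] [LocallyCompactSpace X]
    (S : DRSystem X)
    (hdense : ∀ n : ℕ, 1 ≤ n → ∀ x ∈ S.domN (n - 1), ∀ U : Set X, IsOpen U → x ∈ U →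
      ∃ y ∈ U, y ∈ S.domN n)
    (K : Set X) (hKcpt : IsCompact K) (hKopen : IsOpen K)
    (ε : ℝ) (hε : 0 < ε) (n : ℕ) (hn : 1 ≤ n) :
    S.ssep dist n ε K ≤ S.ssep dist (n + 1) ε K := by
  have key : ∀ Z : ℕ∞,
      (∀ F : Set X, (IsClosed F ∧ F ⊆ S.domN (n - 1)) →
        ∀ A : Set X, S.IsSep dist n ε (K ∩ F) A → A.encard ≤ Z) →
      S.ssep dist n ε K ≤ Z := by
    intro Z h
    simp only [DRSystem.ssep, DRSystem.sep]
    exact iSup₂_le fun F hF => iSup₂_le fun A hA => h F hF A hA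
  refine key _ fun F hF A hA => ?_
  by_cases hfin : A.Finite
  · exact S.aux_main hdense K hKopen ε hε n hn F hF.2 A hA hfin
  · have htop : ∀ m : ℕ, (m : ℕ∞) ≤ S.ssep dist (n + 1) ε K := by
      intro m
      obtain ⟨B, hBsub, hBcard⟩ := Set.exists_subset_encard_eq
        (show (m : ℕ∞) ≤ A.encard by rw [Set.Infinite.encard_eq hfin]; exact le_top)
      have hBfin : B.Finite := Set.finite_of_encard_eq_coe hBcard
      have hBsep : S.IsSep dist n ε (K ∩ F) B := ⟨hBsub.trans hA.1, hA.2.mono hBsub⟩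
      calc (m : ℕ∞) = B.encard := hBcard.symm
        _ ≤ _ := S.aux_main hdense K hKopen ε hε n hn F hF.2 B hBsep hBfin
    rcases eq_or_ne (S.ssep dist (n + 1) ε K) ⊤ with h | h
    · simp [h]
    · lift S.ssep dist (n + 1) ε K to ℕ using h with k hk
      have h6 := htop (k + 1)
      have h7 : k + 1 ≤ k := by exact_mod_cast h6
      omega
end

section
/- Let (X,σ) be a Deaconu-Renault system on a metric space X, and let d and d' be uniformly equivalent metrics on X (both inducing Deaconu-Renault systems with the same σ). Then h_d(σ) = h_{d'}(σ). -/
open Set Filter Topology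
open scoped ENNReal NNReal

section Aux
variable {X : Type*} [TopologicalSpace X]

lemma DRSystem.hMet_le_hMet (S : DRSystem X) (ρ ρ' : X → X → ℝ)
    (h : ∀ ε > (0:ℝ), ∃ δ > (0:ℝ), ∀ x y : X, ρ x y < δ → ρ' x y < ε) :
    S.hMet ρ' ≤ S.hMet ρ := by
  apply iSup₂_le; intro K hK
  apply iSup₂_le; intro ε hε
  obtain ⟨δ, hδ, hδε⟩ := h ε hε
  refine le_trans ?_ (le_iSup₂ (f := fun K (_ : IsCompact K) => ⨆ (ε : ℝ) (_ : (0:ℝ) < ε),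
    Filter.atTop.limsup fun n : ℕ =>
      ((n : ℝ)⁻¹ : EReal) * ENNReal.log ((S.ssep ρ n ε K : ℕ∞) : ℝ≥0∞)) K hK)
  refine le_trans ?_ (le_iSup₂ (δ/2) (by positivity))
  refine Filter.limsup_le_limsup (Filter.Eventually.of_forall fun n => ?_)
  have key : S.ssep ρ' n ε K ≤ S.ssep ρ n (δ/2) K := by
    apply iSup₂_le; intro F hF
    refine le_trans ?_ (le_iSup₂ (f := fun F (_ : IsClosed F ∧ F ⊆ S.domN (n-1)) =>
      S.sep ρ n (δ/2) (K ∩ F)) F hF)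
    apply iSup₂_le; intro A hA
    have hA' : S.IsSep ρ n (δ/2) (K ∩ F) A := by
      refine ⟨hA.1, fun x hx y hy hxy => ?_⟩
      have hlt : ε < S.dN ρ' n x y := hA.2 hx hy hxy
      set T := S.IN n x ∩ S.IN n y with hT
      have hTfin : T.Finite := Set.Finite.subset (Set.finite_Iio n)
        (fun i hi => hi.1.1)
      have hfin' : ((fun i => ρ' (S.toFun^[i] x) (S.toFun^[i] y)) '' T).Finite :=
        hTfin.image _
      have hdef : S.dN ρ' n x y
          = sSup ((fun i => ρ' (S.toFun^[i] x) (S.toFun^[i] y)) '' T) := rfl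
      have hdef2 : S.dN ρ n x y
          = sSup ((fun i => ρ (S.toFun^[i] x) (S.toFun^[i] y)) '' T) := rfl
      have hne : ((fun i => ρ' (S.toFun^[i] x) (S.toFun^[i] y)) '' T).Nonempty := by
        by_contra hc
        rw [Set.not_nonempty_iff_eq_empty] at hc
        rw [hdef, hc, Real.sSup_empty] at hlt
        linarith
      have hmem := hne.csSup_mem hfin'
      obtain ⟨i, hiT, hival⟩ := hmem
      have hgt : ε < ρ' (S.toFun^[i] x) (S.toFun^[i] y) :=
        lt_of_lt_of_eq (hdef ▸ hA.2 hx hy hxy) hival.symm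
      have hd : δ ≤ ρ (S.toFun^[i] x) (S.toFun^[i] y) := by
        by_contra hc
        push_neg at hc
        exact absurd (hδε _ _ hc) (not_lt.mpr hgt.le)
      have hle : ρ (S.toFun^[i] x) (S.toFun^[i] y) ≤ S.dN ρ n x y := by
        rw [hdef2]
        exact le_csSup ((hTfin.image _).bddAbove) (Set.mem_image_of_mem _ hiT)
      linarith
    exact le_iSup₂_of_le A hA' le_rfl
  have hlog : ENNReal.log ((S.ssep ρ' n ε K : ℕ∞) : ℝ≥0∞)
      ≤ ENNReal.log ((S.ssep ρ n (δ/2) K : ℕ∞) : ℝ≥0∞) := by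
    apply ENNReal.log_monotone
    exact_mod_cast key
  exact mul_le_mul_of_nonneg_left hlog (EReal.coe_nonneg.mpr (by positivity))

end Aux

/-- the metric entropy is invariant under uniformly equivalent metrics. -/
theorem statement7 {X : Type*} [t : TopologicalSpace X] [T2Space X] [LocallyCompactSpace X]
    (S : DRSystem X) (d d' : MetricSpace X)
    (hd : d.toPseudoMetricSpace.toUniformSpace.toTopologicalSpace = t)
    (hd' : d'.toPseudoMetricSpace.toUniformSpace.toTopologicalSpace = t)
    (h₁ : @UniformContinuous X X d.toPseudoMetricSpace.toUniformSpace
      d'.toPseudoMetricSpace.toUniformSpace id)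
    (h₂ : @UniformContinuous X X d'.toPseudoMetricSpace.toUniformSpace
      d.toPseudoMetricSpace.toUniformSpace id) :
    S.hMet (@dist X d.toPseudoMetricSpace.toDist) =
      S.hMet (@dist X d'.toPseudoMetricSpace.toDist) := by
  have h12 : ∀ ε > (0:ℝ), ∃ δ > (0:ℝ), ∀ x y : X,
      @dist X d.toPseudoMetricSpace.toDist x y < δ →
      @dist X d'.toPseudoMetricSpace.toDist x y < ε := by
    intro ε hε
    obtain ⟨δ, hδ, H⟩ := (@Metric.uniformContinuous_iff X X d.toPseudoMetricSpace
      d'.toPseudoMetricSpace id).mp h₁ ε hε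
    exact ⟨δ, hδ, fun x y hxy => H hxy⟩
  have h21 : ∀ ε > (0:ℝ), ∃ δ > (0:ℝ), ∀ x y : X,
      @dist X d'.toPseudoMetricSpace.toDist x y < δ →
      @dist X d.toPseudoMetricSpace.toDist x y < ε := by
    intro ε hε
    obtain ⟨δ, hδ, H⟩ := (@Metric.uniformContinuous_iff X X d'.toPseudoMetricSpace
      d.toPseudoMetricSpace id).mp h₂ ε hε
    exact ⟨δ, hδ, fun x y hxy => H hxy⟩
  exact le_antisymm (S.hMet_le_hMet _ _ h21) (S.hMet_le_hMet _ _ h12)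
end

section
/- Let (X,σ_X) and (Y,σ_Y) be Deaconu-Renault systems on metric spaces (X,d) and (Y,d'), and let φ : X → Y be a uniformly continuous factor map. Then h_d(σ_X) ≥ h_{d'}(σ_Y). -/
open Set Filter Topology
open scoped ENNReal NNReal

/-- the metric entropy decreases under a uniformly continuous factor map. -/
theorem statement11 {X Y : Type*} [MetricSpace X] [LocallyCompactSpace X]
    [MetricSpace Y] [LocallyCompactSpace Y]
    (S : DRSystem X) (T : DRSystem Y) (φ : X → Y)
    (hfac : S.IsFactorMap T φ) (huc : UniformContinuous φ) :
    T.hMet dist ≤ S.hMet dist := by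
  obtain ⟨hcont, hcc, hsurj, hdomsub, hcomm, hpre⟩ := hfac
  -- preimages of iterated domains
  have hdomN : ∀ i : ℕ, φ ⁻¹' T.domN i ⊆ S.domN i := by
    intro i
    induction i with
    | zero => intro x _; trivial
    | succ i ih =>
      intro x hx
      obtain ⟨hx1, hx2⟩ := hx
      have hxd : x ∈ S.dom := hpre hx1
      refine ⟨hxd, ih ?_⟩
      show φ (S.toFun x) ∈ T.domN i
      rw [← hcomm x hxd]; exact hx2
  -- intertwining of iterates
  have hiter : ∀ i : ℕ, ∀ x ∈ S.domN i, T.toFun^[i] (φ x) = φ (S.toFun^[i] x) := by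
    intro i
    induction i with
    | zero => intro x _; simp
    | succ i ih =>
      intro x hx
      obtain ⟨hx1, hx2⟩ := hx
      rw [Function.iterate_succ_apply, Function.iterate_succ_apply,
        hcomm x hx1, ih _ hx2]
  -- extraction from dN on Y
  have dN_exists : ∀ (x y : Y) (n : ℕ) {c : ℝ}, 0 ≤ c → c < T.dN dist n x y →
      ∃ i, i ∈ T.IN n x ∩ T.IN n y ∧ c < dist (T.toFun^[i] x) (T.toFun^[i] y) := by
    intro x y n c hc hlt
    simp only [DRSystem.dN] at hlt
    set s := (fun i => dist (T.toFun^[i] x) (T.toFun^[i] y)) '' (T.IN n x ∩ T.IN n y) with hs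
    have hfin : s.Finite := ((Set.finite_Iio n).subset fun i hi => hi.1.1).image _
    have hne : s.Nonempty := by
      by_contra h
      rw [Set.not_nonempty_iff_eq_empty] at h
      rw [h, Real.sSup_empty] at hlt
      exact absurd hlt (not_lt.2 hc)
    obtain ⟨i, hi, hiv⟩ := hne.csSup_mem hfin
    refine ⟨i, hi, ?_⟩
    rw [← hiv] at hlt
    simpa using hlt
  -- lower bound on dN on X
  have dN_ge : ∀ (x y : X) (n i : ℕ), i ∈ S.IN n x ∩ S.IN n y →
      dist (S.toFun^[i] x) (S.toFun^[i] y) ≤ S.dN dist n x y := by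
    intro x y n i hi
    exact le_csSup (((Set.finite_Iio n).subset fun j hj => hj.1.1).image _).bddAbove
      (Set.mem_image_of_mem _ hi)
  rw [DRSystem.hMet]
  refine iSup₂_le fun K hK => iSup₂_le fun ε hε => ?_
  obtain ⟨C, hC, hCK⟩ := hcc K hK
  obtain ⟨δ, hδpos, hδ⟩ := Metric.uniformContinuous_iff.mp huc ε hε
  -- key cardinality estimate
  have key : ∀ n : ℕ, T.ssep dist n ε K ≤ S.ssep dist n (δ/2) C := by
    intro n
    refine iSup₂_le fun F hF => ?_
    have hF' : IsClosed (φ ⁻¹' F) ∧ φ ⁻¹' F ⊆ S.domN (n-1) :=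
      ⟨hF.1.preimage hcont, fun x hx => hdomN _ (hF.2 hx)⟩
    refine le_trans ?_ (le_iSup₂_of_le (φ ⁻¹' F) hF' le_rfl)
    refine iSup₂_le fun A hA => ?_
    have hchoice : ∀ a ∈ A, ∃ x ∈ C, φ x = a := by
      intro a ha
      have : a ∈ φ '' C := by rw [hCK]; exact (hA.1 ha).1
      obtain ⟨x, hx, hxa⟩ := this
      exact ⟨x, hx, hxa⟩
    rcases A.eq_empty_or_nonempty with rfl | ⟨a₀, ha₀⟩
    · simp
    obtain ⟨x₀, _, _⟩ := hchoice a₀ ha₀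
    have : Nonempty X := ⟨x₀⟩
    choose! g hgC hgφ using hchoice
    have hinj : Set.InjOn g A := by
      intro a ha b hb h
      rw [← hgφ a ha, ← hgφ b hb, h]
    have hsep : S.IsSep dist n (δ/2) (C ∩ φ ⁻¹' F) (g '' A) := by
      constructor
      · rintro _ ⟨a, ha, rfl⟩
        refine ⟨hgC a ha, ?_⟩
        show φ (g a) ∈ F
        rw [hgφ a ha]; exact (hA.1 ha).2
      · rintro _ ⟨a, ha, rfl⟩ _ ⟨b, hb, rfl⟩ hne
        have hab : a ≠ b := fun h => hne (by rw [h])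
        have hd : ε < T.dN dist n a b := hA.2 ha hb hab
        obtain ⟨i, hi, hiv⟩ := dN_exists a b n hε.le hd
        have hga : g a ∈ S.domN i := hdomN i (by show φ (g a) ∈ T.domN i; rw [hgφ a ha]; exact hi.1.2)
        have hgb : g b ∈ S.domN i := hdomN i (by show φ (g b) ∈ T.domN i; rw [hgφ b hb]; exact hi.2.2)
        have heqa : T.toFun^[i] a = φ (S.toFun^[i] (g a)) := by
          rw [← hiter i (g a) hga, hgφ a ha]
        have heqb : T.toFun^[i] b = φ (S.toFun^[i] (g b)) := by
          rw [← hiter i (g b) hgb, hgφ b hb]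
        have hbig : δ ≤ dist (S.toFun^[i] (g a)) (S.toFun^[i] (g b)) := by
          by_contra h
          push_neg at h
          have := hδ h
          rw [← heqa, ← heqb] at this
          exact absurd hiv (not_lt.2 this.le)
        have hmem : i ∈ S.IN n (g a) ∩ S.IN n (g b) :=
          ⟨⟨hi.1.1, hga⟩, ⟨hi.2.1, hgb⟩⟩
        calc δ/2 < δ := half_lt_self hδpos
          _ ≤ dist (S.toFun^[i] (g a)) (S.toFun^[i] (g b)) := hbig
          _ ≤ S.dN dist n (g a) (g b) := dN_ge _ _ n i hmem
    calc A.encard = (g '' A).encard := (hinj.encard_image).symm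
      _ ≤ S.sep dist n (δ/2) (C ∩ φ ⁻¹' F) := le_iSup₂_of_le (g '' A) hsep le_rfl
  -- conclude via limsup and sup
  have hterm : ∀ m : ℕ,
      ((m : ℝ)⁻¹ : EReal) * ENNReal.log ((T.ssep dist m ε K : ℕ∞) : ℝ≥0∞) ≤
      ((m : ℝ)⁻¹ : EReal) * ENNReal.log ((S.ssep dist m (δ/2) C : ℕ∞) : ℝ≥0∞) := by
    intro m
    rw [mul_comm, mul_comm (((m : ℝ)⁻¹ : EReal))]
    exact mul_le_mul_of_nonneg_right
      (ENNReal.log_monotone (ENat.toENNReal_le.2 (key m)))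
      (EReal.coe_nonneg.2 (inv_nonneg.2 (Nat.cast_nonneg m)))
  calc Filter.atTop.limsup (fun n : ℕ =>
        ((n : ℝ)⁻¹ : EReal) * ENNReal.log ((T.ssep dist n ε K : ℕ∞) : ℝ≥0∞))
      ≤ Filter.atTop.limsup (fun n : ℕ =>
        ((n : ℝ)⁻¹ : EReal) * ENNReal.log ((S.ssep dist n (δ/2) C : ℕ∞) : ℝ≥0∞)) :=
        Filter.limsup_le_limsup (Filter.Eventually.of_forall hterm)
    _ ≤ S.hMet dist :=
        le_iSup₂_of_le C hC (le_iSup₂_of_le (δ/2) (half_pos hδpos) le_rfl)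
end

section
/- Let (X,σ) be a Deaconu-Renault system on a metric space (X,d), let Y₁,…,Y_k be open invariant subsets of X whose union (not necessarily disjoint) is X, and let (Y_i, σ|_{Y_i}) be the restriction systems. Then: (1) h_d(σ) ≥ max_{1≤i≤k} h_d(σ|_{Y_i}); (2) if each Y_i is also closed, then h_d(σ) = max_{1≤i≤k} h_d(σ|_{Y_i}); (3) if the Y_i are pairwise disjoint, then h_d(σ) = max_{1≤i≤k} h_d(σ|_{Y_i}). -/
open Set Filter Topology
open scoped ENNReal NNReal

/-!
A restriction of `σ` to a subspace `Z` has the same iterates, hence the same metrics `d_n`, as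
`σ` on `Z`; so its separated sets are separated sets of `σ`, which gives `h_d(σ|_Z) ≤ h_d(σ)`.
Conversely a separated set of `σ` splits into its traces on the `Yᵢ`, so
`ssep(n, ε, σ, K) ≤ ∑ᵢ ssep(n, ε, σ|_{Yᵢ}, K ∩ Yᵢ)`. When the `Yᵢ` are closed, each `K ∩ Yᵢ` is
compact, and the exponential growth rate of a finite sum of sequences is the largest of their
growth rates. Pairwise disjoint open sets covering `X` are closed.
-/

open Function in
theorem isClosed_of_pairwise_disjoint_isOpen_of_iUnion_eq_univ {ι α : Type*}
    [TopologicalSpace α] {s : ι → Set α} (h_disj : Pairwise (Disjoint on s))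
    (h_open : ∀ i, IsOpen (s i)) (h_Union : ⋃ i, s i = univ) (i : ι) : IsClosed (s i) := by
  rw [← isOpen_compl_iff, compl_eq_univ_sdiff, ← h_Union, iUnion_sdiff]
  refine isOpen_iUnion fun j => ?_
  rcases eq_or_ne i j with rfl | hij
  · simp
  · simpa only [(h_disj hij.symm).sdiff_eq_left] using h_open j

namespace DRSystem

open ExpGrowth

variable {X : Type*} [TopologicalSpace X]

theorem hMet_eq_iSup_expGrowthSup (S : DRSystem X) (ρ : X → X → ℝ) :
    S.hMet ρ = ⨆ (K : Set X) (_ : IsCompact K), ⨆ (ε : ℝ) (_ : 0 < ε),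
      expGrowthSup fun n => (S.ssep ρ n ε K : ℝ≥0∞) := by
  simp only [hMet, expGrowthSup, EReal.div_eq_inv_mul, EReal.coe_natCast]

structure IsRestriction {Z : Set X} (T : DRSystem Z) (S : DRSystem X) : Prop where
  dom_eq : T.dom = Subtype.val ⁻¹' S.dom
  val_toFun : ∀ y : Z, (y : X) ∈ S.dom → (T.toFun y : X) = S.toFun y

namespace IsRestriction

variable {S : DRSystem X} {Z : Set X} {T : DRSystem Z} (hT : T.IsRestriction S)
include hT

theorem domN_eq (m : ℕ) : T.domN m = Subtype.val ⁻¹' S.domN m := by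
  induction m with
  | zero => rfl
  | succ m ih =>
    ext y
    simp only [domN, mem_inter_iff, mem_preimage, hT.dom_eq, ih]
    exact and_congr_right fun hy => by rw [hT.val_toFun y hy]

theorem val_iterate {m : ℕ} {y : Z} (hy : (y : X) ∈ S.domN m) :
    ((T.toFun^[m] y : Z) : X) = S.toFun^[m] y := by
  induction m generalizing y with
  | zero => rfl
  | succ m ih =>
    obtain ⟨hy₁, hy₂⟩ := hy
    have hstep := hT.val_toFun y hy₁
    rw [Function.iterate_succ_apply, Function.iterate_succ_apply, ih (hstep ▸ hy₂), hstep]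

theorem IN_eq (n : ℕ) (y : Z) : T.IN n y = S.IN n y := by
  simp [IN, hT.domN_eq]

theorem dN_eq (ρ : X → X → ℝ) (n : ℕ) (x y : Z) :
    T.dN (fun a b => ρ a b) n x y = S.dN ρ n x y := by
  rw [dN, dN, hT.IN_eq, hT.IN_eq]
  refine congrArg sSup (image_congr fun j hj => ?_)
  rw [hT.val_iterate hj.1.2, hT.val_iterate hj.2.2]

theorem isSep_preimage {ρ : X → X → ℝ} {n : ℕ} {ε : ℝ} {W A : Set X} (hA : S.IsSep ρ n ε W A) :
    T.IsSep (fun a b => ρ a b) n ε (Subtype.val ⁻¹' W) (Subtype.val ⁻¹' A) :=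
  ⟨preimage_mono hA.1, fun x hx y hy hxy => by
    change ε < _
    rw [hT.dN_eq]
    exact hA.2 hx hy (Subtype.val_injective.ne hxy)⟩

theorem sep_le (ρ : X → X → ℝ) (n : ℕ) (ε : ℝ) (W : Set Z) :
    T.sep (fun a b => ρ a b) n ε W ≤ S.sep ρ n ε (Subtype.val '' W) := by
  refine iSup₂_le fun A hA => le_iSup₂_of_le (Subtype.val '' A) ⟨image_mono hA.1, ?_⟩
    (Subtype.val_injective.encard_image A).ge
  rintro _ ⟨a, ha, rfl⟩ _ ⟨b, hb, rfl⟩ hab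
  rw [← hT.dN_eq]
  exact hA.2 ha hb (ne_of_apply_ne _ hab)

theorem ssep_le [T2Space X] (ρ : X → X → ℝ) (n : ℕ) (ε : ℝ) {K : Set Z} (hK : IsCompact K) :
    T.ssep (fun a b => ρ a b) n ε K ≤ S.ssep ρ n ε (Subtype.val '' K) := by
  refine iSup₂_le fun F ⟨hF, hFdom⟩ => ?_
  have hKF : IsCompact (Subtype.val '' (K ∩ F)) :=
    (hK.inter_right hF).image continuous_subtype_val
  refine le_iSup₂_of_le _ ⟨hKF.isClosed, ?_⟩ ?_
  · rintro _ ⟨a, ha, rfl⟩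
    simpa [hT.domN_eq] using hFdom ha.2
  · rw [inter_eq_self_of_subset_right (image_mono inter_subset_left)]
    exact hT.sep_le ρ n ε (K ∩ F)

theorem hMet_le [T2Space X] (ρ : X → X → ℝ) : T.hMet (fun a b => ρ a b) ≤ S.hMet ρ := by
  simp only [hMet_eq_iSup_expGrowthSup]
  refine iSup₂_le fun K hK => iSup₂_le fun ε hε => ?_
  refine le_iSup₂_of_le _ (hK.image continuous_subtype_val) (le_iSup₂_of_le ε hε ?_)
  exact expGrowthSup_monotone fun n => ENat.toENNReal_mono (hT.ssep_le ρ n ε hK)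

end IsRestriction

section Cover

variable {ι : Type*} [Fintype ι] {S : DRSystem X} {Y : ι → Set X} {T : ∀ i, DRSystem (Y i)}

theorem sep_le_sum_of_iUnion_eq_univ (hcover : ⋃ i, Y i = univ)
    (hT : ∀ i, (T i).IsRestriction S) (ρ : X → X → ℝ) (n : ℕ) (ε : ℝ) (W : Set X) :
    S.sep ρ n ε W ≤ ∑ i, (T i).sep (fun a b => ρ a b) n ε (Subtype.val ⁻¹' W) := by
  refine iSup₂_le fun A hA => ?_
  calc A.encard = (⋃ i, A ∩ Y i).encard := by rw [← inter_iUnion, hcover, inter_univ]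
    _ ≤ ∑ i, (A ∩ Y i).encard := encard_iUnion_le_of_fintype _
    _ = ∑ i, (Subtype.val ⁻¹' A : Set (Y i)).encard := by
        refine Finset.sum_congr rfl fun i _ => ?_
        rw [← Subtype.val_injective.encard_image, Subtype.image_preimage_coe, inter_comm]
    _ ≤ _ := Finset.sum_le_sum fun i _ => le_iSup₂_of_le _ ((hT i).isSep_preimage hA) le_rfl

theorem ssep_le_sum_of_iUnion_eq_univ (hcover : ⋃ i, Y i = univ)
    (hT : ∀ i, (T i).IsRestriction S) (ρ : X → X → ℝ) (n : ℕ) (ε : ℝ) (K : Set X) :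
    S.ssep ρ n ε K ≤ ∑ i, (T i).ssep (fun a b => ρ a b) n ε (Subtype.val ⁻¹' K) := by
  refine iSup₂_le fun F ⟨hF, hFdom⟩ => (sep_le_sum_of_iUnion_eq_univ hcover hT ρ n ε _).trans ?_
  refine Finset.sum_le_sum fun i _ => ?_
  have hFdom' : (Subtype.val ⁻¹' F : Set (Y i)) ⊆ (T i).domN (n - 1) := by
    rw [(hT i).domN_eq]
    exact preimage_mono hFdom
  exact le_iSup₂_of_le _ ⟨hF.preimage continuous_subtype_val, hFdom'⟩ (by rw [preimage_inter])

theorem hMet_le_iSup_of_iUnion_eq_univ (hclosed : ∀ i, IsClosed (Y i))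
    (hcover : ⋃ i, Y i = univ) (hT : ∀ i, (T i).IsRestriction S) (ρ : X → X → ℝ) :
    S.hMet ρ ≤ ⨆ i, (T i).hMet (fun a b => ρ a b) := by
  simp only [hMet_eq_iSup_expGrowthSup]
  refine iSup₂_le fun K hK => iSup₂_le fun ε hε => ?_
  calc expGrowthSup (fun n => (S.ssep ρ n ε K : ℝ≥0∞))
      ≤ expGrowthSup (∑ i, fun n =>
          ((T i).ssep (fun a b => ρ a b) n ε (Subtype.val ⁻¹' K) : ℝ≥0∞)) :=
        expGrowthSup_monotone fun n => by
          rw [Finset.sum_apply]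
          exact (ENat.toENNReal_mono (ssep_le_sum_of_iUnion_eq_univ hcover hT ρ n ε K)).trans_eq
            (map_sum ENat.toENNRealRingHom _ _)
    _ = ⨆ i ∈ Finset.univ, expGrowthSup (fun n =>
          ((T i).ssep (fun a b => ρ a b) n ε (Subtype.val ⁻¹' K) : ℝ≥0∞)) :=
        expGrowthSup_sum _ _
    _ ≤ _ := by
        refine iSup_mono fun i => iSup_le fun _ => le_iSup₂_of_le _
          ((hclosed i).isClosedEmbedding_subtypeVal.isCompact_preimage hK) ?_
        exact le_iSup₂_of_le ε hε le_rfl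

end Cover

end DRSystem

theorem statement12_general {X : Type*} [MetricSpace X]
    (S : DRSystem X) (k : ℕ) (Y : Fin k → Set X)
    (hopen : ∀ i, IsOpen (Y i))
    (hcover : ⋃ i, Y i = Set.univ)
    (T : ∀ i, DRSystem (Y i))
    (hTdom : ∀ i, (T i).dom = Subtype.val ⁻¹' S.dom)
    (hTfun : ∀ i, ∀ y : Y i, (y : X) ∈ S.dom → ((T i).toFun y : X) = S.toFun ↑y) :
    ((⨆ i, (T i).hMet dist) ≤ S.hMet dist) ∧
    ((∀ i, IsClosed (Y i)) → S.hMet dist = ⨆ i, (T i).hMet dist) ∧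
    ((∀ i j, i ≠ j → Disjoint (Y i) (Y j)) → S.hMet dist = ⨆ i, (T i).hMet dist) := by
  have hT : ∀ i, (T i).IsRestriction S := fun i => ⟨hTdom i, hTfun i⟩
  have hle : (⨆ i, (T i).hMet dist) ≤ S.hMet dist := iSup_le fun i => (hT i).hMet_le dist
  have heq (hclosed : ∀ i, IsClosed (Y i)) : S.hMet dist = ⨆ i, (T i).hMet dist :=
    (DRSystem.hMet_le_iSup_of_iUnion_eq_univ hclosed hcover hT dist).antisymm hle
  exact ⟨hle, heq, fun hdisj =>
    heq (isClosed_of_pairwise_disjoint_isOpen_of_iUnion_eq_univ hdisj hopen hcover)⟩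

/-- for open invariant subsets `Y₁,…,Y_k` covering `X`, with restriction
systems `T i` on the subtypes `↥(Y i)` (that is, systems whose domain is `Dom(σ) ∩ Y i` and
whose map agrees with `σ` there):
(1) `h_d(σ) ≥ max_i h_d(σ|_{Y i})`;
(2) if every `Y i` is closed, equality holds;
(3) if the `Y i` are pairwise disjoint, equality holds. -/
theorem statement12 {X : Type*} [MetricSpace X] [LocallyCompactSpace X]
    (S : DRSystem X) (k : ℕ) (hk : 1 ≤ k) (Y : Fin k → Set X)
    (hopen : ∀ i, IsOpen (Y i))
    (hinv : ∀ i, S.toFun '' (S.dom ∩ Y i) ⊆ Y i)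
    (hcover : ⋃ i, Y i = Set.univ)
    (T : ∀ i, DRSystem (Y i))
    (hTdom : ∀ i, (T i).dom = Subtype.val ⁻¹' S.dom)
    (hTfun : ∀ i, ∀ y : Y i, (y : X) ∈ S.dom → ((T i).toFun y : X) = S.toFun ↑y) :
    ((⨆ i, (T i).hMet dist) ≤ S.hMet dist) ∧
    ((∀ i, IsClosed (Y i)) → S.hMet dist = ⨆ i, (T i).hMet dist) ∧
    ((∀ i j, i ≠ j → Disjoint (Y i) (Y j)) → S.hMet dist = ⨆ i, (T i).hMet dist) :=
  statement12_general S k Y hopen hcover T hTdom hTfun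
end

section
/- Let (X,σ) be a Deaconu-Renault system, K ⊆ X compact and α an open cover of K. Then the limit lim_{n→∞} (1/n) H(α_n, K_n) exists. -/
open Set Filter Topology
open scoped ENNReal NNReal

namespace DRSystem
variable {X : Type*} [TopologicalSpace X]
variable (S : DRSystem X)

lemma mem_preN {i : ℕ} {A : Set X} {x : X} :
    x ∈ S.preN i A ↔ x ∈ S.domN i ∧ S.toFun^[i] x ∈ A := Iff.rfl

lemma domN_add (m k : ℕ) : S.domN (m + k) = S.domN m ∩ S.toFun^[m] ⁻¹' (S.domN k) := by
  induction m with
  | zero => simp [domN]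
  | succ m ih =>
      have h1 : m + 1 + k = (m + k) + 1 := by ring
      rw [h1]
      ext x
      simp only [domN, ih, Set.mem_inter_iff, Set.mem_preimage,
        Function.iterate_succ_apply]
      tauto

lemma mem_preN_preN {m k : ℕ} {A : Set X} {x : X} :
    x ∈ S.preN m (S.preN k A) ↔ x ∈ S.preN (m + k) A := by
  simp only [mem_preN, domN_add S m k, Set.mem_inter_iff, Set.mem_preimage]
  have : S.toFun^[m + k] x = S.toFun^[k] (S.toFun^[m] x) := by
    rw [add_comm]; exact Function.iterate_add_apply _ _ _ _
  rw [this]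
  tauto

lemma mem_setIter {Z : Set X} {n : ℕ} {x : X} :
    x ∈ S.setIter Z n ↔ ∀ i ≤ n, x ∈ S.preN i Z := by
  simp [setIter, Nat.lt_succ_iff]

lemma setIter_subset (K : Set X) (m n : ℕ) :
    S.setIter K (m + n + 1) ⊆ S.setIter K m ∩ S.preN (m + 1) (S.setIter K n) := by
  intro x hx
  rw [mem_setIter] at hx
  constructor
  · rw [mem_setIter]
    exact fun i hi => hx i (by omega)
  · have h0 : x ∈ S.preN (m + 1) K := hx (m + 1) (by omega)
    refine ⟨h0.1, ?_⟩
    rw [Set.mem_preimage, S.mem_setIter]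
    intro j hj
    have := hx (m + 1 + j) (by omega)
    rw [← mem_preN_preN] at this
    exact this.2

lemma covIter_join {α : Set (Set X)} {m n : ℕ} {B C : Set X}
    (hB : B ∈ S.covIter α m) (hC : C ∈ S.covIter α n) :
    B ∩ S.preN (m + 1) C ∈ S.covIter α (m + n + 1) := by
  obtain ⟨f, hf, rfl⟩ := hB
  obtain ⟨g, hg, rfl⟩ := hC
  refine ⟨fun i => if i ≤ m then f i else g (i - (m + 1)), ?_, ?_⟩
  · intro i hi
    by_cases h : i ≤ m
    · simpa [h] using hf i h
    · simp only [if_neg h]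
      exact hg _ (by omega)
  · ext x
    constructor
    · rintro ⟨h1, h2⟩
      rw [Set.mem_iInter₂] at h1
      rw [Set.mem_iInter₂]
      intro i hi
      rw [Finset.mem_range, Nat.lt_succ_iff] at hi
      show x ∈ S.preN i (if i ≤ m then f i else g (i - (m + 1)))
      by_cases h : i ≤ m
      · rw [if_pos h]
        exact h1 i (Finset.mem_range.2 (by omega))
      · rw [if_neg h]
        set j := i - (m + 1) with hjdef
        have hij : i = m + 1 + j := by omega
        have hx : S.toFun^[m + 1] x ∈ S.preN j (g j) := by
          have := h2.2
          rw [Set.mem_preimage, Set.mem_iInter₂] at this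
          exact this j (Finset.mem_range.2 (by omega))
        have h4 : x ∈ S.preN (m + 1) (S.preN j (g j)) := ⟨h2.1, hx⟩
        rw [S.mem_preN_preN] at h4
        rw [hij]
        exact h4
    · intro h
      rw [Set.mem_iInter₂] at h
      have hmem : ∀ i ≤ m + n + 1, x ∈ S.preN i (if i ≤ m then f i else g (i - (m + 1))) :=
        fun i hi => h i (Finset.mem_range.2 (by omega))
      refine ⟨?_, ?_⟩
      · rw [Set.mem_iInter₂]
        intro i hi
        rw [Finset.mem_range, Nat.lt_succ_iff] at hi
        have := hmem i (by omega)
        rwa [if_pos hi] at this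
      · have hd : x ∈ S.domN (m + 1) := (hmem (m + 1) (by omega)).1
        refine ⟨hd, ?_⟩
        rw [Set.mem_preimage, Set.mem_iInter₂]
        intro j hj
        rw [Finset.mem_range, Nat.lt_succ_iff] at hj
        have h2 := hmem (m + 1 + j) (by omega)
        rw [if_neg (by omega)] at h2
        have h3 : m + 1 + j - (m + 1) = j := by omega
        rw [h3] at h2
        have h4 : x ∈ S.preN (m + 1) (S.preN j (g j)) := by
          rw [S.mem_preN_preN]; exact h2
        exact h4.2

omit [TopologicalSpace X] in
lemma encard_image2_le (f : Set X → Set X → Set X) {s t : Set (Set X)}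
    (hs : s.Finite) (ht : t.Finite) :
    (Set.image2 f s t).encard ≤ s.encard * t.encard := by
  classical
  rw [← hs.coe_toFinset, ← ht.coe_toFinset, ← Finset.coe_image₂]
  rw [Set.encard_coe_eq_coe_finsetCard, Set.encard_coe_eq_coe_finsetCard,
    Set.encard_coe_eq_coe_finsetCard]
  norm_cast
  exact Finset.card_image₂_le f _ _

lemma exists_min_cover (α : Set (Set X)) (Z : Set X) (h : Ncov α Z ≠ ⊤) :
    ∃ β, β ⊆ α ∧ Z ⊆ ⋃₀ β ∧ β.encard = Ncov α Z := by
  have hN : Ncov α Z = sInf ((fun β => β.encard) '' {β | β ⊆ α ∧ Z ⊆ ⋃₀ β}) := by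
    rw [sInf_image]
    rfl
  have hne : ((fun β => β.encard) '' {β | β ⊆ α ∧ Z ⊆ ⋃₀ β}).Nonempty := by
    by_contra hc
    rw [Set.not_nonempty_iff_eq_empty] at hc
    rw [hN, hc, sInf_empty] at h
    exact h rfl
  have := csInf_mem hne
  rw [← hN] at this
  obtain ⟨β, hβ, hβ2⟩ := this
  exact ⟨β, hβ.1, hβ.2, hβ2⟩

lemma Ncov_subadd (α : Set (Set X)) (K : Set X) {m n : ℕ}
    (hm : Ncov (S.covIter α m) (S.setIter K m) ≠ ⊤)
    (hn : Ncov (S.covIter α n) (S.setIter K n) ≠ ⊤) :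
    Ncov (S.covIter α (m + n + 1)) (S.setIter K (m + n + 1)) ≤
      Ncov (S.covIter α m) (S.setIter K m) * Ncov (S.covIter α n) (S.setIter K n) := by
  obtain ⟨β, hβ1, hβ2, hβ3⟩ := exists_min_cover _ _ hm
  obtain ⟨γ, hγ1, hγ2, hγ3⟩ := exists_min_cover _ _ hn
  set δ := Set.image2 (fun B C => B ∩ S.preN (m + 1) C) β γ with hδ
  have hsub : δ ⊆ S.covIter α (m + n + 1) := by
    rintro D ⟨B, hB, C, hC, rfl⟩
    exact S.covIter_join (hβ1 hB) (hγ1 hC)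
  have hcov : S.setIter K (m + n + 1) ⊆ ⋃₀ δ := by
    intro x hx
    have h := S.setIter_subset K m n hx
    obtain ⟨B, hB, hxB⟩ := hβ2 h.1
    obtain ⟨C, hC, hxC⟩ := hγ2 h.2.2
    exact ⟨B ∩ S.preN (m + 1) C, ⟨B, hB, C, hC, rfl⟩, hxB, h.2.1, hxC⟩
  calc Ncov (S.covIter α (m + n + 1)) (S.setIter K (m + n + 1)) ≤ δ.encard := by
        exact iInf₂_le δ ⟨hsub, hcov⟩
    _ ≤ β.encard * γ.encard := by
        apply encard_image2_le
        · rw [← Set.encard_ne_top_iff]; rw [hβ3]; exact hm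
        · rw [← Set.encard_ne_top_iff]; rw [hγ3]; exact hn
    _ = _ := by rw [hβ3, hγ3]

lemma covIter_zero (α : Set (Set X)) : S.covIter α 0 = α := by
  ext B
  constructor
  · rintro ⟨f, hf, rfl⟩
    have : ⋂ i ∈ Finset.range 1, S.preN i (f i) = f 0 := by
      simp [preN, domN]
    rw [this]
    exact hf 0 le_rfl
  · intro hB
    refine ⟨fun _ => B, fun i _ => hB, ?_⟩
    simp [preN, domN]

lemma setIter_zero (K : Set X) : S.setIter K 0 = K := by
  simp [setIter, preN, domN]

lemma Ncov_zero_ne_top (α : Set (Set X)) (K : Set X) (hK : IsCompact K)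
    (hα : IsOpenCover α K) :
    Ncov (S.covIter α 0) (S.setIter K 0) ≠ ⊤ := by
  rw [covIter_zero, setIter_zero]
  obtain ⟨β, hβα, hβfin, hβcov⟩ := hK.elim_finite_subcover_image hα.1
    (by rw [← Set.sUnion_eq_biUnion]; exact hα.2)
  have : Ncov α K ≤ β.encard := iInf₂_le β ⟨hβα, by rwa [Set.sUnion_eq_biUnion]⟩
  intro htop
  rw [htop] at this
  exact (Set.encard_ne_top_iff.2 hβfin) (top_le_iff.1 this)

lemma Ncov_ne_top (α : Set (Set X)) (K : Set X) (hK : IsCompact K)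
    (hα : IsOpenCover α K) (n : ℕ) :
    Ncov (S.covIter α n) (S.setIter K n) ≠ ⊤ := by
  induction n with
  | zero => exact S.Ncov_zero_ne_top α K hK hα
  | succ n ih =>
      have h0 := S.Ncov_zero_ne_top α K hK hα
      have := S.Ncov_subadd α K h0 ih
      have h2 : (0 : ℕ) + n + 1 = n + 1 := by omega
      rw [h2] at this
      intro htop
      rw [htop] at this
      exact WithTop.mul_ne_top h0 ih (top_le_iff.1 this)

omit [TopologicalSpace X] in
lemma Hcov_eq {α : Set (Set X)} {Z : Set X} (h : Ncov α Z ≠ ⊤) :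
    Hcov α Z = ((Real.log ((max 1 (Ncov α Z)).toNat : ℝ) : ℝ) : EReal) := by
  set k := (max 1 (Ncov α Z)).toNat with hkdef
  have hne : max 1 (Ncov α Z) ≠ ⊤ := by
    rw [← lt_top_iff_ne_top]
    exact max_lt (lt_top_iff_ne_top.2 (by norm_num)) (lt_top_iff_ne_top.2 h)
  have hk : ((k : ℕ∞)) = max 1 (Ncov α Z) := ENat.coe_toNat hne
  have hk1 : 1 ≤ k := by
    have h1 := le_max_left 1 (Ncov α Z)
    rw [← hk] at h1
    exact_mod_cast h1
  rw [Hcov, ← hk]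
  have hcast : (((k : ℕ∞)) : ℝ≥0∞) = (k : ℝ≥0∞) := by simp
  rw [hcast, ENNReal.log_pos_real (Nat.cast_ne_zero.2 (by omega) : (k:ℝ≥0∞) ≠ 0)
    (by simp)]
  simp

end DRSystem

/-- for `K` compact and `α` an open cover of `K`, the limit
`lim_n (1/n) H(α_n, K_n)` exists (in the extended reals). -/
theorem statement15 {X : Type*} [TopologicalSpace X] [T2Space X] [LocallyCompactSpace X]
    (S : DRSystem X) (K : Set X) (hK : IsCompact K)
    (α : Set (Set X)) (hα : DRSystem.IsOpenCover α K) :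
    ∃ L : EReal, Filter.Tendsto
      (fun n : ℕ => ((n : ℝ)⁻¹ : EReal) * DRSystem.Hcov (S.covIter α n) (S.setIter K n))
      Filter.atTop (nhds L) := by
  classical
  set N : ℕ → ℕ∞ := fun n => DRSystem.Ncov (S.covIter α n) (S.setIter K n) with hNdef
  have hNne : ∀ n, N n ≠ ⊤ := S.Ncov_ne_top α K hK hα
  set A : ℕ → ℕ∞ := fun n => max 1 (N n) with hAdef
  have hAne : ∀ n, A n ≠ ⊤ := fun n => by
    rw [← lt_top_iff_ne_top]
    exact max_lt (lt_top_iff_ne_top.2 (by norm_num)) (lt_top_iff_ne_top.2 (hNne n))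
  set r : ℕ → ℝ := fun n => ((A n).toNat : ℝ) with hrdef
  have hkA : ∀ n, (((A n).toNat : ℕ∞)) = A n := fun n => ENat.coe_toNat (hAne n)
  have hr1 : ∀ n, 1 ≤ r n := by
    intro n
    have h1 : (1 : ℕ∞) ≤ A n := le_max_left _ _
    rw [← hkA n] at h1
    have h2 : 1 ≤ (A n).toNat := by exact_mod_cast h1
    show (1 : ℝ) ≤ ((A n).toNat : ℝ)
    exact_mod_cast h2
  have hr0 : ∀ n, 0 < r n := fun n => lt_of_lt_of_le one_pos (hr1 n)
  have hrsub : ∀ m n, r (m + n + 1) ≤ r m * r n := by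
    intro m n
    have hA : A (m + n + 1) ≤ A m * A n := by
      apply max_le
      · calc (1 : ℕ∞) = 1 * 1 := (one_mul 1).symm
          _ ≤ A m * A n := mul_le_mul' (le_max_left _ _) (le_max_left _ _)
      · calc N (m + n + 1) ≤ N m * N n := S.Ncov_subadd α K (hNne m) (hNne n)
          _ ≤ A m * A n := mul_le_mul' (le_max_right _ _) (le_max_right _ _)
    rw [← hkA (m + n + 1), ← hkA m, ← hkA n, ← Nat.cast_mul, Nat.cast_le] at hA
    show ((A (m + n + 1)).toNat : ℝ) ≤ ((A m).toNat : ℝ) * ((A n).toNat : ℝ)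
    exact_mod_cast hA
  set u : ℕ → ℝ := fun n => if n = 0 then 0 else Real.log (r (n - 1)) with hudef
  have hu0 : u 0 = 0 := by simp [hudef]
  have husucc : ∀ n, u (n + 1) = Real.log (r n) := by intro n; simp [hudef]
  have hu_nonneg : ∀ n, 0 ≤ u n := by
    intro n
    cases n with
    | zero => rw [hu0]
    | succ k => rw [husucc]; exact Real.log_nonneg (hr1 k)
  have hsub : Subadditive u := by
    intro m n
    cases m with
    | zero => simpa [hu0] using le_add_of_nonneg_left (le_refl (u n)).trans_eq' rfl
    | succ a =>
      cases n with
      | zero => simp [hu0]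
      | succ b =>
        have h1 : a + 1 + (b + 1) = (a + b + 1) + 1 := by omega
        rw [h1, husucc, husucc, husucc]
        calc Real.log (r (a + b + 1)) ≤ Real.log (r a * r b) :=
              Real.log_le_log (hr0 _) (hrsub a b)
          _ = Real.log (r a) + Real.log (r b) :=
              Real.log_mul (ne_of_gt (hr0 a)) (ne_of_gt (hr0 b))
  have hbdd : BddBelow (Set.range fun n : ℕ => u n / n) := by
    refine ⟨0, ?_⟩
    rintro x ⟨n, rfl⟩
    exact div_nonneg (hu_nonneg n) (Nat.cast_nonneg n)
  have htend := hsub.tendsto_lim hbdd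
  have h1 := htend.comp (Filter.tendsto_add_atTop_nat 1)
  have h2 : Filter.Tendsto (fun n : ℕ => 1 + ((n : ℝ))⁻¹) Filter.atTop (nhds 1) := by
    have ha : Filter.Tendsto (fun n : ℕ => ((n : ℝ))⁻¹) Filter.atTop (nhds 0) :=
      tendsto_inv_atTop_zero.comp tendsto_natCast_atTop_atTop
    have hb : Filter.Tendsto (fun n : ℕ => (1 : ℝ) + ((n : ℝ))⁻¹) Filter.atTop (nhds (1 + 0)) :=
      tendsto_const_nhds.add ha
    simpa using hb
  have hmul := h1.mul h2
  rw [mul_one] at hmul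
  have hw : Filter.Tendsto (fun n : ℕ => ((n : ℝ))⁻¹ * u (n + 1)) Filter.atTop
      (nhds hsub.lim) := by
    apply hmul.congr'
    filter_upwards [Filter.eventually_ge_atTop 1] with n hn
    have hn0 : (n : ℝ) ≠ 0 := Nat.cast_ne_zero.2 (by omega)
    simp only [Function.comp_apply]
    push_cast
    field_simp
  refine ⟨(hsub.lim : EReal), ?_⟩
  have heq : (fun n : ℕ => ((n : ℝ)⁻¹ : EReal) * DRSystem.Hcov (S.covIter α n) (S.setIter K n))
      = fun n : ℕ => ((((n : ℝ))⁻¹ * u (n + 1) : ℝ) : EReal) := by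
    funext n
    rw [DRSystem.Hcov_eq (hNne n), husucc, EReal.coe_mul]
    rfl
  rw [heq]
  exact EReal.tendsto_coe.2 hw
end
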